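/- arXiv:1208.1031 — 3 statements merged into one kernel-verified Lean document; each statement's English description precedes it below -/
import Mathlib

section
/- For the 2D-monolayer Lagrangian L, the second semispray component G^{(2)}_{(1)1} = (g^{2s}/4)·[∂²L/∂x^q∂y^s · y^q − ∂L/∂x^s + ∂²L/∂t∂y^s] (summation over q,s ∈ {1,2}, with (x¹,x²) = (r,φ), (y¹,y²) = (ṙ,φ̇), and g^{2s} the second row of the inverse fundamental metric) equals (ṙ/r)·φ̇ at every point with r > 0, ṙ ≠ 0 and g₁₁ ≠ 0. -/
/-- The 2D-monolayer Lagrangian. -/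
noncomputable def Lag (m p V : ℝ) (U : ℝ → ℝ → ℝ) (t r φ rd φd : ℝ) : ℝ :=
  m / 2 * rd ^ 2 + m * r ^ 2 / 2 * φd ^ 2
    - p * r ^ 5 * |V| * Real.exp (2 * |V| * t / r) * rd⁻¹ + U t r

/-- ∂L/∂x^q, with (x¹,x²) = (r,φ). -/
noncomputable def dLdx (m p V : ℝ) (U : ℝ → ℝ → ℝ) (q : Fin 2) (t r φ rd φd : ℝ) : ℝ :=
  if q = 0 then deriv (fun a => Lag m p V U t a φ rd φd) r
  else deriv (fun a => Lag m p V U t r a rd φd) φ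

/-- ∂L/∂y^s, with (y¹,y²) = (ṙ,φ̇). -/
noncomputable def dLdy (m p V : ℝ) (U : ℝ → ℝ → ℝ) (s : Fin 2) (t r φ rd φd : ℝ) : ℝ :=
  if s = 0 then deriv (fun a => Lag m p V U t r φ a φd) rd
  else deriv (fun a => Lag m p V U t r φ rd a) φd

/-- ∂²L/∂x^q∂y^s. -/
noncomputable def d2Ldxdy (m p V : ℝ) (U : ℝ → ℝ → ℝ) (q s : Fin 2) (t r φ rd φd : ℝ) : ℝ :=
  if q = 0 then deriv (fun a => dLdy m p V U s t a φ rd φd) r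
  else deriv (fun a => dLdy m p V U s t r a rd φd) φ

/-- ∂²L/∂t∂y^s. -/
noncomputable def d2Ldtdy (m p V : ℝ) (U : ℝ → ℝ → ℝ) (s : Fin 2) (t r φ rd φd : ℝ) : ℝ :=
  deriv (fun a => dLdy m p V U s a r φ rd φd) t

/-- The inverse fundamental metric g^{ij}. -/
noncomputable def gI (m p V : ℝ) (i j : Fin 2) (t r φ rd φd : ℝ) : ℝ :=
  if i = 0 ∧ j = 0 then 2 / (m - 2 * p * r ^ 5 * |V| * Real.exp (2 * |V| * t / r) * (rd ^ 3)⁻¹)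
  else if i = 1 ∧ j = 1 then 2 / (m * r ^ 2) else 0

/-- The canonical semispray components G^{(i)}_{(1)1}. -/
noncomputable def Gsem (m p V : ℝ) (U : ℝ → ℝ → ℝ) (i : Fin 2) (t r φ rd φd : ℝ) : ℝ :=
  ∑ s : Fin 2, gI m p V i s t r φ rd φd / 4 *
    ((∑ q : Fin 2, d2Ldxdy m p V U q s t r φ rd φd * (if q = 0 then rd else φd))
      - dLdx m p V U s t r φ rd φd + d2Ldtdy m p V U s t r φ rd φd)

lemma dLdy1 (m p V : ℝ) (U : ℝ → ℝ → ℝ) (t r φ rd x : ℝ) :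
    dLdy m p V U 1 t r φ rd x = m * r ^ 2 * x := by
  have h2 : HasDerivAt (fun a : ℝ => Lag m p V U t r φ rd a) (m * r ^ 2 * x) x := by
    have h : HasDerivAt (fun a : ℝ => m * r ^ 2 / 2 * a ^ 2)
        (m * r ^ 2 / 2 * (2 * x ^ 1)) x := (hasDerivAt_pow 2 x).const_mul _
    have := ((h.const_add (m / 2 * rd ^ 2)).sub_const
      (p * r ^ 5 * |V| * Real.exp (2 * |V| * t / r) * rd⁻¹)).add_const (U t r)
    exact this.congr_deriv (by ring)
  simp [dLdy, h2.deriv]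

/-- the second semispray component equals (ṙ/r)·φ̇. -/
theorem stmt2 (m p V : ℝ) (hm : 0 < m) (hp : 0 < p) (hV : V ≠ 0)
    (U : ℝ → ℝ → ℝ) (hU : ContDiff ℝ 2 (Function.uncurry U))
    (t r φ rd φd : ℝ) (hr : 0 < r) (hrd : rd ≠ 0)
    (hg11 : (m - 2 * p * r ^ 5 * |V| * Real.exp (2 * |V| * t / r) * (rd ^ 3)⁻¹) / 2 ≠ 0) :
    Gsem m p V U 1 t r φ rd φd = rd / r * φd := by
  have hA : d2Ldxdy m p V U 0 1 t r φ rd φd = 2 * m * r * φd := by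
    have heq : (fun a => dLdy m p V U 1 t a φ rd φd) = fun a => m * a ^ 2 * φd := by
      funext a; rw [dLdy1]
    have h : HasDerivAt (fun a : ℝ => m * a ^ 2 * φd) (2 * m * r * φd) r := by
      have h0 : HasDerivAt (fun a : ℝ => a ^ 2) (2 * r ^ 1) r := hasDerivAt_pow 2 r
      have := (h0.const_mul m).mul_const φd
      exact this.congr_deriv (by ring)
    simp [d2Ldxdy, heq, h.deriv]
  have hB : d2Ldxdy m p V U 1 1 t r φ rd φd = 0 := by
    have heq : (fun a => dLdy m p V U 1 t r a rd φd) = fun _ => m * r ^ 2 * φd := by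
      funext a; rw [dLdy1]
    simp [d2Ldxdy, heq]
  have hC : dLdx m p V U 1 t r φ rd φd = 0 := by
    have heq : (fun a => Lag m p V U t r a rd φd) = fun _ =>
        Lag m p V U t r 0 rd φd := by funext a; simp [Lag]
    simp [dLdx, heq]
  have hD : d2Ldtdy m p V U 1 t r φ rd φd = 0 := by
    have heq : (fun a => dLdy m p V U 1 a r φ rd φd) = fun _ => m * r ^ 2 * φd := by
      funext a; rw [dLdy1]
    simp [d2Ldtdy, heq]
  have hg : gI m p V 1 0 t r φ rd φd = 0 := by simp [gI]
  have hg1 : gI m p V 1 1 t r φ rd φd = 2 / (m * r ^ 2) := by simp [gI]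
  simp only [Gsem, Fin.sum_univ_two, ↓reduceIte, hA, hB, hC, hD, hg, hg1]
  have hm' : m ≠ 0 := ne_of_gt hm
  have hr' : r ≠ 0 := ne_of_gt hr
  field_simp
  ring
end

section
/- For the 2D-monolayer Lagrangian L, the first semispray component G^{(1)}_{(1)1} = (g^{1s}/4)·[∂²L/∂x^q∂y^s · y^q − ∂L/∂x^s + ∂²L/∂t∂y^s] (summation over q,s ∈ {1,2}, with (x¹,x²) = (r,φ), (y¹,y²) = (ṙ,φ̇)) equals [p r³ |V| e^{2|V|t/r}·(5r ṙ⁻¹ − 2|V|t ṙ⁻¹ + |V| r ṙ⁻²) − (1/2)·∂U/∂r − (m r/2)·φ̇²] / (m − 2p r⁵ |V| e^{2|V|t/r} ṙ⁻³) at every point with r > 0, ṙ ≠ 0 and g₁₁ ≠ 0. -/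
set_option maxHeartbeats 1000000 in
/-- the first semispray component of the 2D-monolayer Lagrangian. -/
theorem stmt3 (m p V : ℝ) (hm : 0 < m) (hp : 0 < p) (hV : V ≠ 0)
    (U : ℝ → ℝ → ℝ) (hU : ContDiff ℝ 2 (Function.uncurry U))
    (t r φ rd φd : ℝ) (hr : 0 < r) (hrd : rd ≠ 0)
    (hg11 : (m - 2 * p * r ^ 5 * |V| * Real.exp (2 * |V| * t / r) * (rd ^ 3)⁻¹) / 2 ≠ 0) :
    Gsem m p V U 0 t r φ rd φd =
      (p * r ^ 3 * |V| * Real.exp (2 * |V| * t / r)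
          * (5 * r * rd⁻¹ - 2 * |V| * t * rd⁻¹ + |V| * r * (rd ^ 2)⁻¹)
        - 1 / 2 * deriv (fun a => U t a) r - m * r / 2 * φd ^ 2)
      / (m - 2 * p * r ^ 5 * |V| * Real.exp (2 * |V| * t / r) * (rd ^ 3)⁻¹) := by
  have hrne : r ≠ 0 := hr.ne'
  have hD : (m - 2 * p * r ^ 5 * |V| * Real.exp (2 * |V| * t / r) * (rd ^ 3)⁻¹) ≠ 0 := by
    intro h; exact hg11 (by rw [h]; ring)
  -- ∂L/∂ṙ as an explicit function of (t, r)
  have L1 : ∀ t' r' φ', dLdy m p V U 0 t' r' φ' rd φd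
      = m * rd + p * r' ^ 5 * |V| * Real.exp (2 * |V| * t' / r') * (rd ^ 2)⁻¹ := by
    intro t' r' φ'
    rw [dLdy, if_pos rfl]
    have h : HasDerivAt (fun a : ℝ => m / 2 * a ^ 2 + m * r' ^ 2 / 2 * φd ^ 2
        - p * r' ^ 5 * |V| * Real.exp (2 * |V| * t' / r') * a⁻¹ + U t' r')
        (m / 2 * (((2:ℕ):ℝ) * rd ^ (2 - 1)) - p * r' ^ 5 * |V| * Real.exp (2 * |V| * t' / r') * (-(rd ^ 2)⁻¹))
        rd := by
      exact ((((hasDerivAt_pow 2 rd).const_mul (m / 2)).add_const _).sub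
        ((hasDerivAt_inv hrd).const_mul _)).add_const _
    simp only [Lag]
    rw [h.deriv]; ring
  -- second mixed derivative ∂²L/∂r∂ṙ
  have E00 : d2Ldxdy m p V U 0 0 t r φ rd φd
      = p * |V| * Real.exp (2 * |V| * t / r) * (5 * r ^ 4 - 2 * |V| * t * r ^ 3) * (rd ^ 2)⁻¹ := by
    rw [d2Ldxdy, if_pos rfl]
    have hfun : (fun a => dLdy m p V U 0 t a φ rd φd)
        = fun a => m * rd + p * a ^ 5 * |V| * Real.exp (2 * |V| * t * a⁻¹) * (rd ^ 2)⁻¹ := by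
      funext a; rw [L1 t a φ, div_eq_mul_inv]
    rw [hfun]
    have hexp : HasDerivAt (fun a : ℝ => Real.exp (2 * |V| * t * a⁻¹))
        (Real.exp (2 * |V| * t * r⁻¹) * (2 * |V| * t * (-(r ^ 2)⁻¹))) r :=
      ((hasDerivAt_inv hrne).const_mul (2 * |V| * t)).exp
    have h : HasDerivAt (fun a : ℝ => m * rd + p * a ^ 5 * |V| * Real.exp (2 * |V| * t * a⁻¹) * (rd ^ 2)⁻¹)
        (((p * (↑5 * r ^ 4) * |V|) * Real.exp (2 * |V| * t * r⁻¹)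
          + (p * r ^ 5 * |V|) * (Real.exp (2 * |V| * t * r⁻¹) * (2 * |V| * t * (-(r ^ 2)⁻¹)))) * (rd ^ 2)⁻¹)
        r := by
      exact (((((hasDerivAt_pow 5 r).const_mul p).mul_const |V|).mul hexp).mul_const _).const_add _
    rw [h.deriv, div_eq_mul_inv]
    push_cast
    field_simp
    ring
  -- second mixed derivative ∂²L/∂φ∂ṙ vanishes
  have E10 : d2Ldxdy m p V U 1 0 t r φ rd φd = 0 := by
    rw [d2Ldxdy, if_neg (by decide)]
    have hfun : (fun a => dLdy m p V U 0 t r a rd φd)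
        = fun _ => m * rd + p * r ^ 5 * |V| * Real.exp (2 * |V| * t / r) * (rd ^ 2)⁻¹ := by
      funext a; rw [L1 t r a]
    rw [hfun, deriv_const]
  -- ∂²L/∂t∂ṙ
  have ET : d2Ldtdy m p V U 0 t r φ rd φd
      = p * r ^ 5 * |V| * Real.exp (2 * |V| * t / r) * (2 * |V| / r) * (rd ^ 2)⁻¹ := by
    rw [d2Ldtdy]
    have hfun : (fun a => dLdy m p V U 0 a r φ rd φd)
        = fun a => m * rd + p * r ^ 5 * |V| * Real.exp (2 * |V| * a / r) * (rd ^ 2)⁻¹ := by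
      funext a; rw [L1 a r φ]
    rw [hfun]
    have hexp : HasDerivAt (fun a : ℝ => Real.exp (2 * |V| * a / r))
        (Real.exp (2 * |V| * t / r) * (2 * |V| * 1 / r)) t :=
      (((hasDerivAt_id t).const_mul (2 * |V|)).div_const r).exp
    have h : HasDerivAt (fun a : ℝ => m * rd + p * r ^ 5 * |V| * Real.exp (2 * |V| * a / r) * (rd ^ 2)⁻¹)
        ((p * r ^ 5 * |V| * (Real.exp (2 * |V| * t / r) * (2 * |V| * 1 / r))) * (rd ^ 2)⁻¹) t := by
      exact ((hexp.const_mul _).mul_const _).const_add _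
    rw [h.deriv]; ring
  -- ∂L/∂r
  have hUdiff : Differentiable ℝ (fun a => U t a) :=
    by have := (hU.differentiable (by norm_num)).comp ((differentiable_const t).prodMk differentiable_id); exact this
  have EX : dLdx m p V U 0 t r φ rd φd
      = m * r * φd ^ 2 - p * |V| * Real.exp (2 * |V| * t / r) * (5 * r ^ 4 - 2 * |V| * t * r ^ 3) * rd⁻¹
        + deriv (fun a => U t a) r := by
    rw [dLdx, if_pos rfl]
    have hexp : HasDerivAt (fun a : ℝ => Real.exp (2 * |V| * t * a⁻¹))
        (Real.exp (2 * |V| * t * r⁻¹) * (2 * |V| * t * (-(r ^ 2)⁻¹))) r :=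
      ((hasDerivAt_inv hrne).const_mul (2 * |V| * t)).exp
    have hfun : (fun a => Lag m p V U t a φ rd φd)
        = fun a => m / 2 * rd ^ 2 + m * a ^ 2 / 2 * φd ^ 2
          - p * a ^ 5 * |V| * Real.exp (2 * |V| * t * a⁻¹) * rd⁻¹ + U t a := by
      funext a; rw [Lag, div_eq_mul_inv (2 * |V| * t)]
    rw [hfun]
    have h : HasDerivAt (fun a : ℝ => m / 2 * rd ^ 2 + m * a ^ 2 / 2 * φd ^ 2
        - p * a ^ 5 * |V| * Real.exp (2 * |V| * t * a⁻¹) * rd⁻¹ + U t a)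
        ((m * (↑2 * r ^ 1) / 2 * φd ^ 2
          - ((p * (↑5 * r ^ 4) * |V|) * Real.exp (2 * |V| * t * r⁻¹)
            + (p * r ^ 5 * |V|) * (Real.exp (2 * |V| * t * r⁻¹) * (2 * |V| * t * (-(r ^ 2)⁻¹)))) * rd⁻¹)
          + deriv (fun a => U t a) r) r := by
      exact ((((((hasDerivAt_pow 2 r).const_mul m).div_const 2).mul_const (φd ^ 2)).const_add
        (m / 2 * rd ^ 2)).sub
        (((((hasDerivAt_pow 5 r).const_mul p).mul_const |V|).mul hexp).mul_const rd⁻¹)).add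
        (hUdiff r).hasDerivAt
    rw [h.deriv, div_eq_mul_inv (2 * |V| * t)]
    push_cast
    field_simp
    ring
  -- assemble
  rw [Gsem, Fin.sum_univ_two, Fin.sum_univ_two, Fin.sum_univ_two]
  simp only [gI, if_pos, if_neg]
  norm_num
  rw [E00, E10, ET, EX, div_div, div_mul_eq_mul_div,
    div_eq_div_iff (mul_ne_zero hD (by norm_num)) hD]
  field_simp
  ring
end

section
/- Let (r(t),φ(t)) be a twice continuously differentiable curve with r(t) > 0, ṙ(t) ≠ 0 and g₁₁ ≠ 0 along the curve. Then the curve satisfies the Euler–Lagrange equations of the 2D-monolayer Lagrangian L, i.e. d/dt[∂L/∂ṙ] = ∂L/∂r and d/dt[∂L/∂φ̇] = ∂L/∂φ along the curve, if and only if r̈ + 2·G^{(1)}_{(1)1}(t,r,ṙ,φ̇) = 0 and φ̈ + 2·(ṙ/r)·φ̇ = 0, where G^{(1)}_{(1)1} = [p r³ |V| e^{2|V|t/r}·(5r ṙ⁻¹ − 2|V|t ṙ⁻¹ + |V| r ṙ⁻²) − (1/2)·∂U/∂r − (m r/2)·φ̇²] / (m − 2p r⁵ |V| e^{2|V|t/r}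 ṙ⁻³). -/
/-- The first semispray component G^{(1)}_{(1)1} in explicit form. -/
noncomputable def Gone (m p V : ℝ) (U : ℝ → ℝ → ℝ) (t r rd φd : ℝ) : ℝ :=
  (p * r ^ 3 * |V| * Real.exp (2 * |V| * t / r)
      * (5 * r * rd⁻¹ - 2 * |V| * t * rd⁻¹ + |V| * r * (rd ^ 2)⁻¹)
    - 1 / 2 * deriv (fun a => U t a) r - m * r / 2 * φd ^ 2)
  / (m - 2 * p * r ^ 5 * |V| * Real.exp (2 * |V| * t / r) * (rd ^ 3)⁻¹)

/-- a nondegenerate C² curve satisfies the Euler–Lagrange equations of the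
2D-monolayer Lagrangian iff it satisfies the semispray (geodesic-type) equations. -/
theorem stmt4 (m p V : ℝ) (hm : 0 < m) (hp : 0 < p) (hV : V ≠ 0)
    (U : ℝ → ℝ → ℝ) (hU : ContDiff ℝ 2 (Function.uncurry U))
    (r φ : ℝ → ℝ) (hr : ContDiff ℝ 2 r) (hφ : ContDiff ℝ 2 φ)
    (hrpos : ∀ t, 0 < r t) (hrd : ∀ t, deriv r t ≠ 0)
    (hg11 : ∀ t, (m - 2 * p * (r t) ^ 5 * |V| * Real.exp (2 * |V| * t / r t)
        * ((deriv r t) ^ 3)⁻¹) / 2 ≠ 0) :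
    (∀ t,
        deriv (fun s =>
            deriv (fun v => Lag m p V U s (r s) (φ s) v (deriv φ s)) (deriv r s)) t
          = deriv (fun a => Lag m p V U t a (φ t) (deriv r t) (deriv φ t)) (r t)
      ∧ deriv (fun s =>
            deriv (fun w => Lag m p V U s (r s) (φ s) (deriv r s) w) (deriv φ s)) t
          = deriv (fun a => Lag m p V U t (r t) a (deriv r t) (deriv φ t)) (φ t))
    ↔ (∀ t,
        deriv (deriv r) t + 2 * Gone m p V U t (r t) (deriv r t) (deriv φ t) = 0
      ∧ deriv (deriv φ) t + 2 * (deriv r t / r t) * deriv φ t = 0) := by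
  -- basic differentiability facts
  have hr2 : ContDiff ℝ (1 + 1 : WithTop ℕ∞) r := hr.of_le (by norm_num)
  have hφ2 : ContDiff ℝ (1 + 1 : WithTop ℕ∞) φ := hφ.of_le (by norm_num)
  have hrdiff : Differentiable ℝ r := (contDiff_succ_iff_deriv.mp hr2).1
  have hr' : Differentiable ℝ (deriv r) :=
    (contDiff_succ_iff_deriv.mp hr2).2.2.differentiable one_ne_zero
  have hφdiff : Differentiable ℝ φ := (contDiff_succ_iff_deriv.mp hφ2).1
  have hφ' : Differentiable ℝ (deriv φ) :=
    (contDiff_succ_iff_deriv.mp hφ2).2.2.differentiable one_ne_zero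
  have hUdiff : ∀ t x, DifferentiableAt ℝ (fun a => U t a) x := by
    intro t x
    have h1 : Differentiable ℝ (Function.uncurry U) := hU.differentiable (by norm_num)
    exact (h1.comp ((differentiable_const t).prodMk differentiable_id)).differentiableAt
  refine forall_congr' fun t => ?_
  have hrt : HasDerivAt r (deriv r t) t := (hrdiff t).hasDerivAt
  have hdr : HasDerivAt (deriv r) (deriv (deriv r) t) t := (hr' t).hasDerivAt
  have hφt : HasDerivAt φ (deriv φ t) t := (hφdiff t).hasDerivAt
  have hdφ : HasDerivAt (deriv φ) (deriv (deriv φ) t) t := (hφ' t).hasDerivAt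
  have hrne : r t ≠ 0 := (hrpos t).ne'
  have hrdt : deriv r t ≠ 0 := hrd t
  -- ============ first equation ============
  have inner1 : ∀ s, deriv (fun v => Lag m p V U s (r s) (φ s) v (deriv φ s)) (deriv r s)
      = m * deriv r s + p * r s ^ 5 * |V| * Real.exp (2 * |V| * s / r s)
          * ((deriv r s) ^ 2)⁻¹ := by
    intro s
    have h2 : HasDerivAt (fun v : ℝ => v ^ 2) (2 * deriv r s) (deriv r s) := by
      simpa using hasDerivAt_pow 2 (deriv r s)
    have h3 : HasDerivAt (fun v : ℝ => v⁻¹) (-((deriv r s) ^ 2)⁻¹) (deriv r s) :=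
      hasDerivAt_inv (hrd s)
    have hL : HasDerivAt (fun v => Lag m p V U s (r s) (φ s) v (deriv φ s))
        (m * deriv r s + p * r s ^ 5 * |V| * Real.exp (2 * |V| * s / r s)
          * ((deriv r s) ^ 2)⁻¹) (deriv r s) := by
      unfold Lag
      have := (((h2.const_mul (m/2)).add_const (m * r s ^ 2 / 2 * (deriv φ s) ^ 2)).fun_sub
        (h3.const_mul (p * r s ^ 5 * |V| * Real.exp (2 * |V| * s / r s)))).add_const
        (U s (r s))
      exact this.congr_deriv (by ring)
    exact hL.deriv
  have hLHS1 : deriv (fun s =>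
        deriv (fun v => Lag m p V U s (r s) (φ s) v (deriv φ s)) (deriv r s)) t
      = m * deriv (deriv r) t
        + |V| * Real.exp (2 * |V| * t / r t) * p *
          ( (5 * (r t) ^ 4 * deriv r t
              + (r t) ^ 5 * (2 * |V| * r t - 2 * |V| * t * deriv r t) / (r t) ^ 2)
              / (deriv r t) ^ 2
            - (r t) ^ 5 * (2 * deriv r t * deriv (deriv r) t) / (deriv r t) ^ 4 ) := by
    rw [funext inner1]
    have hq : HasDerivAt (fun s => 2 * |V| * s / r s)
        ((2 * |V| * r t - 2 * |V| * t * deriv r t) / (r t) ^ 2) t := by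
      have h1 : HasDerivAt (fun s : ℝ => 2 * |V| * s) (2 * |V|) t := by
        simpa using (hasDerivAt_id t).const_mul (2 * |V|)
      have := h1.fun_div hrt hrne
      convert this using 1 <;> ring
    have hexp : HasDerivAt (fun s => Real.exp (2 * |V| * s / r s))
        (Real.exp (2 * |V| * t / r t)
          * ((2 * |V| * r t - 2 * |V| * t * deriv r t) / (r t) ^ 2)) t := hq.exp
    have hinv2 : HasDerivAt (fun s => ((deriv r s) ^ 2)⁻¹)
        (-(2 * deriv r t * deriv (deriv r) t) / ((deriv r t) ^ 2) ^ 2) t := by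
      have h2 : HasDerivAt (fun s => (deriv r s) ^ 2)
          (2 * deriv r t * deriv (deriv r) t) t := by
        have := hdr.pow 2
        exact this.congr_deriv (by ring)
      exact h2.inv (pow_ne_zero 2 hrdt)
    have hB : HasDerivAt (fun s => p * r s ^ 5 * |V| * Real.exp (2 * |V| * s / r s))
        ((p * (5 * (r t) ^ 4 * deriv r t) * |V|) * Real.exp (2 * |V| * t / r t)
          + p * r t ^ 5 * |V| *
            (Real.exp (2 * |V| * t / r t)
              * ((2 * |V| * r t - 2 * |V| * t * deriv r t) / (r t) ^ 2))) t := by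
      have h5 : HasDerivAt (fun s => (r s) ^ 5) (5 * (r t) ^ 4 * deriv r t) t := by
        have := hrt.pow 5
        exact this.congr_deriv (by norm_num)
      exact ((h5.const_mul p).mul_const |V|).mul hexp
    have hF := (hdr.const_mul m).fun_add (hB.fun_mul hinv2)
    rw [hF.deriv]
    field_simp
    ring
  have hRHS1 : deriv (fun a => Lag m p V U t a (φ t) (deriv r t) (deriv φ t)) (r t)
      = m * r t * (deriv φ t) ^ 2
        - p * |V| * Real.exp (2 * |V| * t / r t)
            * (5 * (r t) ^ 4 - 2 * |V| * t * (r t) ^ 3) * (deriv r t)⁻¹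
        + deriv (fun a => U t a) (r t) := by
    have hexp_a : HasDerivAt (fun a : ℝ => Real.exp (2 * |V| * t / a))
        (Real.exp (2 * |V| * t / r t) * (-(2 * |V| * t) / (r t) ^ 2)) (r t) := by
      have hq : HasDerivAt (fun a : ℝ => 2 * |V| * t / a) (-(2 * |V| * t) / (r t) ^ 2) (r t) := by
        have := (hasDerivAt_const (r t) (2 * |V| * t)).fun_div (hasDerivAt_id (r t)) hrne
        exact this.congr_deriv (by simp)
      exact hq.exp
    have h2 : HasDerivAt (fun a : ℝ => m * a ^ 2 / 2 * (deriv φ t) ^ 2)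
        (m * r t * (deriv φ t) ^ 2) (r t) := by
      have := (((hasDerivAt_pow 2 (r t)).const_mul m).div_const 2).mul_const ((deriv φ t) ^ 2)
      exact this.congr_deriv (by push_cast; ring)
    have h5 : HasDerivAt (fun a : ℝ => a ^ 5) (5 * (r t) ^ 4) (r t) := by
      have := hasDerivAt_pow 5 (r t)
      exact this.congr_deriv (by norm_num)
    have hA := (((h5.const_mul p).mul_const |V|).fun_mul hexp_a).mul_const (deriv r t)⁻¹
    have hUa : HasDerivAt (fun a => U t a) (deriv (fun a => U t a) (r t)) (r t) :=
      (hUdiff t (r t)).hasDerivAt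
    have hL := (((hasDerivAt_const (r t) (m / 2 * (deriv r t) ^ 2)).fun_add h2).fun_sub hA).fun_add hUa
    have : HasDerivAt (fun a => Lag m p V U t a (φ t) (deriv r t) (deriv φ t))
        (m * r t * (deriv φ t) ^ 2
          - p * |V| * Real.exp (2 * |V| * t / r t)
              * (5 * (r t) ^ 4 - 2 * |V| * t * (r t) ^ 3) * (deriv r t)⁻¹
          + deriv (fun a => U t a) (r t)) (r t) := by
      unfold Lag
      exact hL.congr_deriv (by field_simp; ring)
    exact this.deriv
  have hD : m - 2 * p * (r t) ^ 5 * |V| * Real.exp (2 * |V| * t / r t)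
      * ((deriv r t) ^ 3)⁻¹ ≠ 0 := by
    intro h
    exact hg11 t (by rw [h]; norm_num)
  have iff1 : (deriv (fun s =>
        deriv (fun v => Lag m p V U s (r s) (φ s) v (deriv φ s)) (deriv r s)) t
      = deriv (fun a => Lag m p V U t a (φ t) (deriv r t) (deriv φ t)) (r t))
      ↔ (deriv (deriv r) t + 2 * Gone m p V U t (r t) (deriv r t) (deriv φ t) = 0) := by
    rw [hLHS1, hRHS1, ← sub_eq_zero]
    set N : ℝ := p * (r t) ^ 3 * |V| * Real.exp (2 * |V| * t / r t)
        * (5 * r t * (deriv r t)⁻¹ - 2 * |V| * t * (deriv r t)⁻¹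
            + |V| * r t * ((deriv r t) ^ 2)⁻¹)
        - 1 / 2 * deriv (fun a => U t a) (r t) - m * r t / 2 * (deriv φ t) ^ 2 with hN
    set D : ℝ := m - 2 * p * (r t) ^ 5 * |V| * Real.exp (2 * |V| * t / r t)
        * ((deriv r t) ^ 3)⁻¹ with hDdef
    have hGone : Gone m p V U t (r t) (deriv r t) (deriv φ t) = N / D := rfl
    have key : (m * deriv (deriv r) t
        + |V| * Real.exp (2 * |V| * t / r t) * p *
          ( (5 * (r t) ^ 4 * deriv r t
              + (r t) ^ 5 * (2 * |V| * r t - 2 * |V| * t * deriv r t) / (r t) ^ 2)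
              / (deriv r t) ^ 2
            - (r t) ^ 5 * (2 * deriv r t * deriv (deriv r) t) / (deriv r t) ^ 4 ))
        - (m * r t * (deriv φ t) ^ 2
          - p * |V| * Real.exp (2 * |V| * t / r t)
              * (5 * (r t) ^ 4 - 2 * |V| * t * (r t) ^ 3) * (deriv r t)⁻¹
          + deriv (fun a => U t a) (r t))
      = deriv (deriv r) t * D + 2 * N := by
      rw [hN, hDdef]
      field_simp
      ring
    rw [key, hGone]
    have hsplit : deriv (deriv r) t * D + 2 * N
        = (deriv (deriv r) t + 2 * (N / D)) * D := by
      field_simp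
    rw [hsplit]
    constructor
    · intro h2
      rcases mul_eq_zero.mp h2 with h3 | h3
      · exact h3
      · exact absurd h3 hD
    · intro h
      rw [h, zero_mul]
  -- ============ second equation ============
  have inner2 : ∀ s, deriv (fun w => Lag m p V U s (r s) (φ s) (deriv r s) w) (deriv φ s)
      = m * r s ^ 2 * deriv φ s := by
    intro s
    have h2 : HasDerivAt (fun w : ℝ => m * r s ^ 2 / 2 * w ^ 2)
        (m * r s ^ 2 * deriv φ s) (deriv φ s) := by
      have := (hasDerivAt_pow 2 (deriv φ s)).const_mul (m * r s ^ 2 / 2)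
      exact this.congr_deriv (by norm_num; ring)
    have hL : HasDerivAt (fun w => Lag m p V U s (r s) (φ s) (deriv r s) w)
        (m * r s ^ 2 * deriv φ s) (deriv φ s) := by
      unfold Lag
      have := (((hasDerivAt_const (deriv φ s) (m / 2 * (deriv r s) ^ 2)).fun_add h2).sub_const
        (p * r s ^ 5 * |V| * Real.exp (2 * |V| * s / r s) * (deriv r s)⁻¹)).add_const
        (U s (r s))
      exact this.congr_deriv (by ring)
    exact hL.deriv
  have hG := ((hrt.fun_pow 2).const_mul m).fun_mul hdφ
  have hLHS2 : deriv (fun s =>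
        deriv (fun w => Lag m p V U s (r s) (φ s) (deriv r s) w) (deriv φ s)) t
      = m * (2 * r t ^ 1 * deriv r t) * deriv φ t
        + m * r t ^ 2 * deriv (deriv φ) t := by
    rw [funext inner2]
    have := hG.deriv
    convert this using 2 <;> norm_num
  have hRHS2 : deriv (fun a => Lag m p V U t (r t) a (deriv r t) (deriv φ t)) (φ t) = 0 := by
    simp [Lag]
  have iff2 : (deriv (fun s =>
        deriv (fun w => Lag m p V U s (r s) (φ s) (deriv r s) w) (deriv φ s)) t
      = deriv (fun a => Lag m p V U t (r t) a (deriv r t) (deriv φ t)) (φ t))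
      ↔ (deriv (deriv φ) t + 2 * (deriv r t / r t) * deriv φ t = 0) := by
    rw [hLHS2, hRHS2]
    have key : m * (2 * r t ^ 1 * deriv r t) * deriv φ t + m * r t ^ 2 * deriv (deriv φ) t
        = (deriv (deriv φ) t + 2 * (deriv r t / r t) * deriv φ t) * (m * r t ^ 2) := by
      field_simp
      ring
    rw [key, mul_eq_zero]
    have : m * r t ^ 2 ≠ 0 := by positivity
    simp [this]
  exact and_congr iff1 iff2
end
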